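/- Let (M, Q, ⋆, f^M, f^Q) be structures where M is a complete lattice, Q a quantale, ⋆ : M × Q → M join-preserving in each coordinate with residual [q] (m ⋆ q ≤ m' ⟺ m ≤ [q]m'), and f^M : M → M, f^Q : Q → Q are join-preserving maps satisfying f^M(m ⋆ q) ≤ f^M(m) ⋆ f^Q(q). Let [f^M] denote the right adjoint of f^M and [f^Q] that of f^Q (which exist since both preserve joins). Then for all m' ∈ M and q ∈ Q: if f^Q(q) = ⋁{q' | q A q'} for a family {q' | q A q'}, then ⋀{[f^M][q']m' | q A q'} ≤ [q][f^M]m'. -/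
import Mathlib


/-- The DEL axiom `⋀{[f^M][q']m' | q A q'} ≤ [q][f^M]m'` holds in any
module `(M, Q, ⋆)` with an interacting pair of join-preserving maps
`f^M, f^Q` such that `f^M(m ⋆ q) ≤ f^M(m) ⋆ f^Q(q)` and
`f^Q(q) = ⋁{q' | q A q'}`. -/
theorem del_axiom {M Q : Type*} [CompleteLattice M] [CompleteLattice Q]
    [Semigroup Q]
    (star : M → Q → M)
    (h1 : ∀ (S : Set M) (q : Q), star (sSup S) q = ⨆ m ∈ S, star m q)
    (h2 : ∀ (m : M) (S : Set Q), star m (sSup S) = ⨆ r ∈ S, star m r)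
    (br : Q → M → M)
    (hadj : ∀ (q : Q) (m m' : M), star m q ≤ m' ↔ m ≤ br q m')
    (fM : M → M) (fQ : Q → Q)
    (hfM : ∀ S : Set M, fM (sSup S) = ⨆ m ∈ S, fM m)
    (hfQ : ∀ S : Set Q, fQ (sSup S) = ⨆ r ∈ S, fQ r)
    (bfM : M → M) (hadjM : ∀ m m' : M, fM m ≤ m' ↔ m ≤ bfM m')
    (bfQ : Q → Q) (hadjQ : ∀ q q' : Q, fQ q ≤ q' ↔ q ≤ bfQ q')
    (hint : ∀ (m : M) (q : Q), fM (star m q) ≤ star (fM m) (fQ q))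
    (A : Q → Q → Prop) (q : Q) (hq : fQ q = sSup {q' | A q q'}) (m' : M) :
    ⨅ q' ∈ {q' | A q q'}, bfM (br q' m') ≤ br q (bfM m') := by
  set x := ⨅ q' ∈ {q' | A q q'}, bfM (br q' m') with hx
  rw [← hadj, ← hadjM]
  calc fM (star x q) ≤ star (fM x) (fQ q) := hint x q
    _ = ⨆ q' ∈ {q' | A q q'}, star (fM x) q' := by rw [hq, h2]
    _ ≤ m' := by
        apply iSup_le; intro q'; apply iSup_le; intro hq'
        rw [hadj]
        exact (hadjM _ _).mpr (biInf_le _ hq')
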